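/- Let A be a unital complex algebra, φ a linear functional on A with φ(1) = 1, and x₁,…,x_n ∈ A. If the joint distribution of (x₁,…,x_n) with respect to φ is invariant under the algebraic coaction of 𝓑_s(n), then for every k ≥ 1 and all i₁,…,i_k ∈ {1,…,n}: φ(x_{i₁}·x_{i₂}⋯x_{i_k}) = n^{−k}·Σ_{j₁,…,j_k=1}^n φ(x_{j₁}·x_{j₂}⋯x_{j_k}). In particular, any two moments φ(x_{i₁}⋯x_{i_k}) and φ(x_{i₁'}⋯x_{i_k'}) of the same degree k coincide. -/

import Mathlib

/-!
Invariance has to hold in every C*-algebraic model of the `𝓑_s(n)` relations, and one model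
already forces the conclusion: in `n × n` matrices take `u_{jk} = e_{j+k, j+k}` (indices mod `n`),
a Latin square of diagonal matrix units, so that every column sums to `1`, and let `P` be the
projection onto the constant vectors. Then `P u_{jk} P = n⁻¹ P` for all `j, k`, so each term of the
coaction collapses to `n^{-m} φ(x_{j₁} ⋯ x_{j_m}) P`, and comparing coefficients of `P ≠ 0` gives
the formula, whose right-hand side no longer depends on `i`.
-/

universe u

/-- The family `(u_{ij}, P)` satisfies the defining relations of the boolean permutation
quantum semigroup `𝓑_s(n)`. -/
def BsRel {C : Type u} [Ring C] [StarRing C] {n : ℕ} (u : Fin n → Fin n → C) (P : C) : Prop :=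
  (∀ i j, star (u i j) = u i j) ∧
  (∀ i j, u i j * u i j = u i j) ∧
  (∀ i k l, k ≠ l → u i k * u i l = 0) ∧
  (∀ i k l, k ≠ l → u k i * u l i = 0) ∧
  star P = P ∧ P * P = P ∧
  (∀ i, (∑ k, u k i) * P = P)

/-- Invariance of the joint distribution of `(x₁,…,x_n)` with respect to `φ` under the
algebraic coaction of `𝓑_s(n)`. -/
def BsAlgInvariant {A : Type*} [Ring A] [Algebra ℂ A] {n : ℕ}
    (φ : A →ₗ[ℂ] ℂ) (x : Fin n → A) : Prop :=
  ∀ (C : Type u) [NormedRing C] [StarRing C] [CStarRing C] [NormedAlgebra ℂ C]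
    [CompleteSpace C] (u : Fin n → Fin n → C) (P : C), BsRel u P →
    ∀ (m : ℕ) (i : Fin (m + 1) → Fin n),
      φ ((List.ofFn fun t => x (i t)).prod) • P =
        ∑ j : Fin (m + 1) → Fin n,
          φ ((List.ofFn fun t => x (j t)).prod) •
            ((List.ofFn fun t => P * u (j t) (i t)).prod * P)

open scoped Matrix.Norms.L2Operator

lemma List.prod_mul_eq_pow_smul {R C : Type*} [CommSemiring R] [Semiring C] [Algebra R C]
    {P : C} {c : R} : ∀ {l : List C}, (∀ g ∈ l, g * P = c • P) → l.prod * P = c ^ l.length • P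
  | [], _ => by simp
  | g :: l, h => by
    rw [List.prod_cons, mul_assoc, List.prod_mul_eq_pow_smul fun g' hg' => h g' (.tail _ hg'),
      mul_smul_comm, h g List.mem_cons_self, smul_smul, List.length_cons, pow_succ]

namespace Matrix

variable {ι : Type*} [Fintype ι]

variable (ι) in
/-- The orthogonal projection onto the constant vectors. -/
noncomputable def uniformProj : Matrix ι ι ℂ := of fun _ _ => (Fintype.card ι : ℂ)⁻¹

lemma star_uniformProj : star (uniformProj ι) = uniformProj ι := by
  ext a b
  simp [uniformProj, star_apply]

lemma uniformProj_mul_self [Nonempty ι] : uniformProj ι * uniformProj ι = uniformProj ι := by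
  ext a b
  simp [uniformProj, mul_apply]

lemma uniformProj_ne_zero [Nonempty ι] : uniformProj ι ≠ 0 := by
  obtain ⟨a⟩ := ‹Nonempty ι›
  refine fun h => ?_
  simpa [uniformProj] using congrFun (congrFun h a) a

lemma uniformProj_mul_single_mul [DecidableEq ι] (a : ι) :
    uniformProj ι * single a a 1 * uniformProj ι = (Fintype.card ι : ℂ)⁻¹ • uniformProj ι := by
  ext b c
  simp [uniformProj, mul_apply, single, ite_and, mul_ite]

lemma bsRel_single_uniformProj [DecidableEq ι] [Nonempty ι] {n : ℕ} (σ : Fin n → Fin n → ι)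
    (hrow : ∀ i, Function.Injective (σ i)) (hcol : ∀ i, Function.Bijective (σ · i)) :
    BsRel (fun j k => single (σ j k) (σ j k) (1 : ℂ)) (uniformProj ι) := by
  refine ⟨fun j k => ?_, fun j k => ?_, fun i k l hkl => ?_, fun i k l hkl => ?_,
    star_uniformProj, uniformProj_mul_self, fun i => ?_⟩
  · simp [star_eq_conjTranspose, conjTranspose_single]
  · simp
  · exact single_mul_single_of_ne (h := (hrow i).ne hkl) ..
  · exact single_mul_single_of_ne (h := fun h => hkl ((hcol i).injective h)) ..
  · rw [(hcol i).sum_comp fun m => single m m (1 : ℂ), sum_single_one, one_mul]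

end Matrix

section

variable {A : Type*} [Ring A] [Algebra ℂ A] {n : ℕ} {φ : A →ₗ[ℂ] ℂ} {x : Fin n → A}

lemma BsAlgInvariant.moment_eq_pow_mul_sum (hinv : BsAlgInvariant.{u} φ x)
    {C : Type u} [NormedRing C] [StarRing C] [CStarRing C] [NormedAlgebra ℂ C] [CompleteSpace C]
    {v : Fin n → Fin n → C} {P : C} (hrel : BsRel v P) (hP : P ≠ 0) {c : ℂ}
    (hc : ∀ j i, P * v j i * P = c • P) (k : ℕ) (i : Fin (k + 1) → Fin n) :
    φ ((List.ofFn fun t => x (i t)).prod) =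
      c ^ (k + 1) * ∑ j : Fin (k + 1) → Fin n, φ ((List.ofFn fun t => x (j t)).prod) := by
  have hcompress (j : Fin (k + 1) → Fin n) :
      (List.ofFn fun t => P * v (j t) (i t)).prod * P = c ^ (k + 1) • P := by
    rw [List.prod_mul_eq_pow_smul (R := ℂ), List.length_ofFn]
    intro g hg
    obtain ⟨t, rfl⟩ := List.mem_ofFn.mp hg
    exact hc (j t) (i t)
  have h := hinv C v P hrel k i
  simp only [hcompress, smul_smul, ← Finset.sum_smul] at h
  rw [smul_left_injective ℂ hP h, ← Finset.sum_mul, mul_comm]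

lemma BsAlgInvariant.moment_eq_inv_pow_mul_sum [NeZero n] (hinv : BsAlgInvariant.{u} φ x)
    (k : ℕ) (i : Fin (k + 1) → Fin n) :
    φ ((List.ofFn fun t => x (i t)).prod) =
      ((n : ℂ) ^ (k + 1))⁻¹ * ∑ j : Fin (k + 1) → Fin n, φ ((List.ofFn fun t => x (j t)).prod) := by
  -- Indexing by `ULift (Fin n)` puts the matrix model in the universe `u` of `BsAlgInvariant`.
  let σ (j l : Fin n) : ULift.{u} (Fin n) := ⟨j + l⟩
  have hrow (j : Fin n) : Function.Injective (σ j) :=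
    ULift.up_injective.comp (add_right_injective j)
  have hcol (l : Fin n) : Function.Bijective (σ · l) :=
    Equiv.ulift.symm.bijective.comp (Equiv.addRight l).bijective
  have h := hinv.moment_eq_pow_mul_sum (Matrix.bsRel_single_uniformProj σ hrow hcol)
    Matrix.uniformProj_ne_zero (fun _ _ => Matrix.uniformProj_mul_single_mul _) k i
  rwa [Fintype.card_ulift, Fintype.card_fin, inv_pow] at h

end

theorem stmt14_general {A : Type*} [Ring A] [Algebra ℂ A] (n : ℕ)
    (φ : A →ₗ[ℂ] ℂ) (x : Fin n → A)
    (hinv : BsAlgInvariant.{u} φ x) :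
    (∀ (k : ℕ) (i : Fin (k + 1) → Fin n),
      φ ((List.ofFn fun t => x (i t)).prod) =
        ((n : ℂ) ^ (k + 1))⁻¹ *
          ∑ j : Fin (k + 1) → Fin n, φ ((List.ofFn fun t => x (j t)).prod)) ∧
    (∀ (k : ℕ) (i i' : Fin (k + 1) → Fin n),
      φ ((List.ofFn fun t => x (i t)).prod) = φ ((List.ofFn fun t => x (i' t)).prod)) := by
  have hmoment : ∀ (k : ℕ) (i : Fin (k + 1) → Fin n),
      φ ((List.ofFn fun t => x (i t)).prod) =
        ((n : ℂ) ^ (k + 1))⁻¹ *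
          ∑ j : Fin (k + 1) → Fin n, φ ((List.ofFn fun t => x (j t)).prod) := by
    rcases n.eq_zero_or_pos with rfl | hn
    · exact fun _ i => (i 0).elim0
    have : NeZero n := ⟨hn.ne'⟩
    exact hinv.moment_eq_inv_pow_mul_sum
  exact ⟨hmoment, fun k i i' => by rw [hmoment k i, hmoment k i']⟩

/-- If the joint distribution of `(x₁,…,x_n)` with respect to `φ` is invariant under the
algebraic coaction of `𝓑_s(n)`, then every moment of degree `k` equals the average
`n^{-k}·Σ_j φ(x_{j₁}⋯x_{j_k})`; in particular any two moments of the same degree agree. -/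
theorem stmt14 {A : Type*} [Ring A] [Algebra ℂ A] (n : ℕ)
    (φ : A →ₗ[ℂ] ℂ) (hφ : φ 1 = 1) (x : Fin n → A)
    (hinv : BsAlgInvariant.{u} φ x) :
    (∀ (k : ℕ) (i : Fin (k + 1) → Fin n),
      φ ((List.ofFn fun t => x (i t)).prod) =
        ((n : ℂ) ^ (k + 1))⁻¹ *
          ∑ j : Fin (k + 1) → Fin n, φ ((List.ofFn fun t => x (j t)).prod)) ∧
    (∀ (k : ℕ) (i i' : Fin (k + 1) → Fin n),
      φ ((List.ofFn fun t => x (i t)).prod) = φ ((List.ofFn fun t => x (i' t)).prod)) :=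
  stmt14_general n φ x hinv
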